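/- arXiv:1708.01957 — 6 statements merged into one kernel-verified Lean document; each statement's English description precedes it below -/
import Mathlib

section
/- For all integers L ≥ 2 and N ≥ 1, the number of partitions of N with smallest part equal to 1, all parts ≤ L+1, and where part L occurs with frequency δ_{L,1} (i.e., L does not occur as a part when L ≥ 2), is at least the number of nonempty partitions of N into parts from {2, 3, ..., L+1}. -/
open Multiset

/-- A choice of a member of a multiset (any member; `headI` of its list). -/
noncomputable def buMin (s : Multiset ℕ) : ℕ := s.toList.headI

lemma buMin_mem {s : Multiset ℕ} (hs : s ≠ 0) : buMin s ∈ s := by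
  have h : s.toList ≠ [] := by
    intro h
    apply hs
    rw [← Multiset.coe_toList s, h]
    rfl
  rw [← Multiset.mem_toList]
  unfold buMin
  cases hl : s.toList with
  | nil => exact absurd hl h
  | cons a t => simp

/-- The injection on multisets of parts. -/
noncomputable def buF (L : ℕ) (s : Multiset ℕ) : Multiset ℕ :=
  if s.count L = 0 then s.erase (buMin s) + Multiset.replicate (buMin s) 1
  else s.filter (· ≠ L) + Multiset.replicate (L * s.count L) 1

lemma count_one_buF (L : ℕ) (hL : 2 ≤ L) (s : Multiset ℕ) (h2 : ∀ i ∈ s, 2 ≤ i) :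
    (buF L s).count 1 = if s.count L = 0 then buMin s else L * s.count L := by
  have hc1 : s.count 1 = 0 := by
    rw [Multiset.count_eq_zero]
    intro h; exact absurd (h2 1 h) (by norm_num)
  unfold buF
  split_ifs with h
  · have : (s.erase (buMin s)).count 1 = 0 :=
      Nat.eq_zero_of_le_zero (hc1 ▸ Multiset.count_le_of_le 1 (Multiset.erase_le _ s))
    simp [this, Multiset.count_replicate]
  · have hL1 : (1 : ℕ) ≠ L := by omega
    simp [Multiset.count_filter, hL1, hc1, Multiset.count_replicate]

/-- **Theorem 1.1 (Berkovich–Uncu).** For `L ≥ 2` and `N ≥ 1`, the number of partitions of `N`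
with smallest part `1`, all parts `≤ L+1`, and `L` not appearing as a part, is at least the
number of nonempty partitions of `N` into parts from `{2, …, L+1}`. -/
theorem stmt0 (L N : ℕ) (hL : 2 ≤ L) (hN : 1 ≤ N) :
    Nat.card {p : Nat.Partition N //
        1 ∈ p.parts ∧ (∀ i ∈ p.parts, i ≤ L + 1) ∧ p.parts.count L = 0} ≥
    Nat.card {p : Nat.Partition N //
        p.parts ≠ 0 ∧ ∀ i ∈ p.parts, 2 ≤ i ∧ i ≤ L + 1} := by
  -- the map as a function between subtypes
  have key : ∀ p : Nat.Partition N, p.parts ≠ 0 → (∀ i ∈ p.parts, 2 ≤ i ∧ i ≤ L + 1) →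
      (∀ i ∈ buF L p.parts, 0 < i) ∧ (buF L p.parts).sum = N ∧
      1 ∈ buF L p.parts ∧ (∀ i ∈ buF L p.parts, i ≤ L + 1) ∧ (buF L p.parts).count L = 0 := by
    intro p hne h
    have hmem := buMin_mem hne
    have hm2 : 2 ≤ buMin p.parts := (h _ hmem).1
    have hmL : buMin p.parts ≤ L + 1 := (h _ hmem).2
    constructor
    · intro i hi
      unfold buF at hi
      split_ifs at hi <;> rcases Multiset.mem_add.mp hi with hi | hi
      · exact Nat.lt_of_lt_of_le (by norm_num) (h i (Multiset.mem_of_mem_erase hi)).1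
      · simp [Multiset.eq_of_mem_replicate hi]
      · exact Nat.lt_of_lt_of_le (by norm_num) (h i (Multiset.mem_of_mem_filter hi)).1
      · simp [Multiset.eq_of_mem_replicate hi]
    refine ⟨?_, ?_, ?_, ?_⟩
    · -- sum
      unfold buF
      split_ifs with hc
      · have := Multiset.cons_erase hmem
        have hsum : (buMin p.parts ::ₘ p.parts.erase (buMin p.parts)).sum = N := by
          rw [this, p.parts_sum]
        rw [Multiset.sum_cons] at hsum
        simp [Multiset.sum_replicate]
        omega
      · have hsplit : p.parts.filter (· = L) + p.parts.filter (¬ · = L) = p.parts :=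
          Multiset.filter_add_not _ _
        have heq : p.parts.filter (· = L) = Multiset.replicate (p.parts.count L) L :=
          Multiset.filter_eq' _ _
        have : (p.parts.filter (· = L)).sum + (p.parts.filter (¬ · = L)).sum = N := by
          rw [← Multiset.sum_add, hsplit, p.parts_sum]
        rw [heq] at this
        simp [Multiset.sum_replicate] at this ⊢
        have hfe : p.parts.filter (fun x => ¬ x = L) = p.parts.filter (fun x => x ≠ L) := by
          rfl
        rw [← hfe, Nat.mul_comm L (p.parts.count L)]
        omega
    · -- 1 ∈
      unfold buF
      split_ifs with hc
      · refine Multiset.mem_add.mpr (Or.inr ?_)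
        rw [Multiset.mem_replicate]; omega
      · refine Multiset.mem_add.mpr (Or.inr ?_)
        rw [Multiset.mem_replicate]
        constructor
        · have : 1 ≤ p.parts.count L := Nat.one_le_iff_ne_zero.mpr hc
          nlinarith
        · rfl
    · -- all ≤ L+1
      intro i hi
      unfold buF at hi
      split_ifs at hi <;> rcases Multiset.mem_add.mp hi with hi | hi
      · exact (h i (Multiset.mem_of_mem_erase hi)).2
      · rw [Multiset.eq_of_mem_replicate hi]; omega
      · exact (h i (Multiset.mem_of_mem_filter hi)).2
      · rw [Multiset.eq_of_mem_replicate hi]; omega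
    · -- count L = 0
      have hL1 : L ≠ 1 := by omega
      unfold buF
      split_ifs with hc
      · have h1 : (p.parts.erase (buMin p.parts)).count L = 0 :=
          Nat.eq_zero_of_le_zero (hc ▸ Multiset.count_le_of_le L (Multiset.erase_le _ _))
        simp only [Multiset.count_add, h1, Multiset.count_replicate]
        rw [if_neg (by omega : ¬ (1 : ℕ) = L)]
      · simp only [Multiset.count_add, Multiset.count_filter, Multiset.count_replicate]
        rw [if_neg (by simp : ¬ L ≠ L), if_neg (by omega : ¬ (1 : ℕ) = L)]
  -- injectivity of buF on the source
  have inj : ∀ s t : Multiset ℕ, s ≠ 0 → t ≠ 0 →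
      (∀ i ∈ s, 2 ≤ i ∧ i ≤ L + 1) → (∀ i ∈ t, 2 ≤ i ∧ i ≤ L + 1) →
      buF L s = buF L t → s = t := by
    intro s t hs ht h2s h2t heq
    have hms := buMin_mem hs
    have hmt := buMin_mem ht
    have hcount := congrArg (Multiset.count 1) heq
    rw [count_one_buF L hL s (fun i hi => (h2s i hi).1),
        count_one_buF L hL t (fun i hi => (h2t i hi).1)] at hcount
    -- analyze cases
    by_cases hcs : s.count L = 0 <;> by_cases hct : t.count L = 0
    · -- A / A
      rw [if_pos hcs, if_pos hct] at hcount
      unfold buF at heq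
      rw [if_pos hcs, if_pos hct, hcount] at heq
      have := add_right_cancel heq
      calc s = buMin s ::ₘ s.erase (buMin s) := (Multiset.cons_erase hms).symm
        _ = buMin t ::ₘ t.erase (buMin t) := by rw [hcount, this]
        _ = t := Multiset.cons_erase hmt
    · -- A / B : impossible
      exfalso
      rw [if_pos hcs, if_neg hct] at hcount
      have h1 : 2 ≤ buMin s := (h2s _ hms).1
      have h2 : buMin s ≤ L + 1 := (h2s _ hms).2
      have h3 : buMin s ≠ L := by
        intro h; rw [← h] at hcs
        exact (Multiset.count_eq_zero.mp hcs) (h ▸ hms)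
      have h4 : 1 ≤ t.count L := Nat.one_le_iff_ne_zero.mpr hct
      rcases Nat.lt_or_ge (t.count L) 2 with h5 | h5
      · interval_cases h : t.count L <;> omega
      · nlinarith
    · -- B / A : impossible
      exfalso
      rw [if_neg hcs, if_pos hct] at hcount
      have h1 : 2 ≤ buMin t := (h2t _ hmt).1
      have h2 : buMin t ≤ L + 1 := (h2t _ hmt).2
      have h3 : buMin t ≠ L := by
        intro h; rw [← h] at hct
        exact (Multiset.count_eq_zero.mp hct) (h ▸ hmt)
      have h4 : 1 ≤ s.count L := Nat.one_le_iff_ne_zero.mpr hcs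
      rcases Nat.lt_or_ge (s.count L) 2 with h5 | h5
      · interval_cases h : s.count L <;> omega
      · nlinarith
    · -- B / B
      rw [if_neg hcs, if_neg hct] at hcount
      have hcc : s.count L = t.count L := by
        have : L ≠ 0 := by omega
        exact Nat.eq_of_mul_eq_mul_left (by omega) hcount
      unfold buF at heq
      rw [if_neg hcs, if_neg hct, hcc] at heq
      have hfilter := add_right_cancel heq
      calc s = s.filter (· = L) + s.filter (¬ · = L) := (Multiset.filter_add_not _ _).symm
        _ = Multiset.replicate (s.count L) L + s.filter (· ≠ L) := by
              rw [Multiset.filter_eq']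
        _ = Multiset.replicate (t.count L) L + t.filter (· ≠ L) := by rw [hcc, hfilter]
        _ = t.filter (· = L) + t.filter (¬ · = L) := by rw [Multiset.filter_eq']
        _ = t := Multiset.filter_add_not _ _
  -- conclude
  let f : {p : Nat.Partition N // p.parts ≠ 0 ∧ ∀ i ∈ p.parts, 2 ≤ i ∧ i ≤ L + 1} →
      {p : Nat.Partition N //
        1 ∈ p.parts ∧ (∀ i ∈ p.parts, i ≤ L + 1) ∧ p.parts.count L = 0} :=
    fun x =>
      ⟨⟨buF L x.1.parts, fun {i} hi => (key x.1 x.2.1 x.2.2).1 i hi,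
        (key x.1 x.2.1 x.2.2).2.1⟩,
        (key x.1 x.2.1 x.2.2).2.2.1, (key x.1 x.2.1 x.2.2).2.2.2.1,
        (key x.1 x.2.1 x.2.2).2.2.2.2⟩
  have hfinj : Function.Injective f := by
    intro x y hxy
    have hparts : buF L x.1.parts = buF L y.1.parts := congrArg (fun z => z.1.parts) hxy
    have := inj x.1.parts y.1.parts x.2.1 y.2.1 x.2.2 y.2.2 hparts
    exact Subtype.ext (Nat.Partition.ext this)
  exact Nat.card_le_card_of_injective f hfinj
end

section
/- For every integer L ≥ 2, the q-series H_{L,1}(q) := q/((q;q)_{L-1}(1-q^{L+1})) − (1/(q²;q)_L − 1) has non-negative coefficients in its power series expansion in q. -/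
/-!
Let `M = {2, …, L-1, L+1}` and `R = ∏_{m ∈ M} (1 - q^m)`. Then `(q;q)_{L-1}(1-q^{L+1}) = (1-q) R`
and `(q²;q)_L = (1-q^L) R`, so `H_{L,1} = (b - 1)/R + 1` with
`b = 1/(1-q) - 1/(1-q^L) = ∑_{L ∤ n} q^n`. No element of `M` is divisible by `L`, hence
`b - ∑_{m ∈ M} q^m ≽ 0`. For any `b` and any set `s` of positive exponents with
`b - ∑_{m ∈ s} q^m ≽ 0`, the remainder `(b - 1)/∏_{m ∈ s}(1 - q^m) + 1 - (b - ∑_{m ∈ s} q^m)` is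
`≽ 0`, by induction on `s`: adding an exponent `a` multiplies the old remainder by `1/(1-q^a)` and
adds `(b - ∑ q^m) · q^a/(1-q^a)`.
-/

open PowerSeries

/-- `(q^s; q)_n` as a formal power series in `q = X` over `ℚ`. -/
noncomputable def qp (s n : ℕ) : PowerSeries ℚ :=
  ∏ i ∈ Finset.range n, (1 - (X : PowerSeries ℚ) ^ (s + i))

section CoeffNonneg

variable {R : Type*} [CommSemiring R] [PartialOrder R] [IsOrderedRing R]

def CoeffNonneg (f : R⟦X⟧) : Prop := ∀ n, 0 ≤ coeff n f

theorem CoeffNonneg.add {f g : R⟦X⟧} (hf : CoeffNonneg f) (hg : CoeffNonneg g) :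
    CoeffNonneg (f + g) := fun n => by
  rw [map_add]
  exact add_nonneg (hf n) (hg n)

theorem CoeffNonneg.mul {f g : R⟦X⟧} (hf : CoeffNonneg f) (hg : CoeffNonneg g) :
    CoeffNonneg (f * g) := fun n => by
  rw [coeff_mul]
  exact Finset.sum_nonneg fun p _ => mul_nonneg (hf p.1) (hg p.2)

theorem coeffNonneg_X_pow (m : ℕ) : CoeffNonneg (X ^ m : R⟦X⟧) := fun n => by
  rw [coeff_X_pow]
  split_ifs <;> simp

end CoeffNonneg

section InvOneSubXPow

variable {K : Type*} [Field K]

theorem constantCoeff_one_sub_X_pow {m : ℕ} (hm : m ≠ 0) :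
    constantCoeff (1 - X ^ m : K⟦X⟧) ≠ 0 := by
  simp [zero_pow hm]

theorem inv_one_sub_X_pow {m : ℕ} (hm : m ≠ 0) :
    (1 - X ^ m : K⟦X⟧)⁻¹ = expand m hm (mk 1) := by
  rw [PowerSeries.inv_eq_iff_mul_eq_one (constantCoeff_one_sub_X_pow hm)]
  simpa using congrArg (expand m hm) (mk_one_mul_one_sub_eq_one K)

theorem coeff_inv_one_sub_X_pow {m : ℕ} (hm : m ≠ 0) (n : ℕ) :
    coeff n (1 - X ^ m : K⟦X⟧)⁻¹ = if m ∣ n then 1 else 0 := by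
  rw [inv_one_sub_X_pow hm, coeff_expand]
  simp

theorem X_pow_mul_inv_one_sub_X_pow {m : ℕ} (hm : m ≠ 0) :
    (X ^ m * (1 - X ^ m)⁻¹ : K⟦X⟧) = (1 - X ^ m)⁻¹ - 1 := by
  linear_combination -PowerSeries.mul_inv_cancel _ (constantCoeff_one_sub_X_pow (K := K) hm)

variable [PartialOrder K] [IsOrderedRing K]

theorem coeffNonneg_inv_one_sub_X_pow {m : ℕ} (hm : m ≠ 0) :
    CoeffNonneg (1 - X ^ m : K⟦X⟧)⁻¹ := fun n => by
  rw [coeff_inv_one_sub_X_pow hm]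
  split_ifs <;> simp

theorem coeffNonneg_sub_one_mul_inv_prod_add_one_sub {b : K⟦X⟧} {s : Finset ℕ} (hs : 0 ∉ s)
    (hb : CoeffNonneg (b - ∑ m ∈ s, X ^ m)) :
    CoeffNonneg ((b - 1) * (∏ m ∈ s, (1 - X ^ m))⁻¹ + 1 - (b - ∑ m ∈ s, X ^ m)) := by
  induction s using Finset.induction_on with
  | empty => simp [CoeffNonneg]
  | @insert a s ha ih =>
    have ha0 : a ≠ 0 := by rintro rfl; exact hs (Finset.mem_insert_self 0 s)
    rw [Finset.sum_insert ha] at hb ⊢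
    have hb' : CoeffNonneg (b - ∑ m ∈ s, X ^ m) := by
      convert hb.add (coeffNonneg_X_pow a) using 1
      ring
    have hstep := X_pow_mul_inv_one_sub_X_pow (K := K) ha0
    have key : (b - 1) * (∏ m ∈ insert a s, (1 - X ^ m))⁻¹ + 1 - (b - (X ^ a + ∑ m ∈ s, X ^ m))
        = ((b - 1) * (∏ m ∈ s, (1 - X ^ m))⁻¹ + 1 - (b - ∑ m ∈ s, X ^ m)) * (1 - X ^ a)⁻¹
          + (b - (X ^ a + ∑ m ∈ s, X ^ m)) * (X ^ a * (1 - X ^ a)⁻¹) := by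
      rw [Finset.prod_insert ha, PowerSeries.mul_inv_rev]
      linear_combination (1 + X ^ a + ∑ m ∈ s, X ^ m - b) * hstep
    rw [key]
    exact ((ih (fun h => hs (Finset.mem_insert_of_mem h)) hb').mul
      (coeffNonneg_inv_one_sub_X_pow ha0)).add
      (hb.mul ((coeffNonneg_X_pow a).mul (coeffNonneg_inv_one_sub_X_pow ha0)))

theorem coeffNonneg_sub_one_mul_inv_prod_add_one {b : K⟦X⟧} {s : Finset ℕ} (hs : 0 ∉ s)
    (hb : CoeffNonneg (b - ∑ m ∈ s, X ^ m)) :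
    CoeffNonneg ((b - 1) * (∏ m ∈ s, (1 - X ^ m))⁻¹ + 1) := by
  simpa using (coeffNonneg_sub_one_mul_inv_prod_add_one_sub hs hb).add hb

theorem coeffNonneg_inv_one_sub_X_sub_inv_one_sub_X_pow_sub_sum {L : ℕ} (hL : L ≠ 0)
    {s : Finset ℕ} (hs : ∀ m ∈ s, ¬ L ∣ m) :
    CoeffNonneg ((1 - X ^ 1)⁻¹ - (1 - X ^ L)⁻¹ - ∑ m ∈ s, X ^ m : K⟦X⟧) := fun n => by
  simp only [map_sub, map_sum, coeff_inv_one_sub_X_pow one_ne_zero, coeff_inv_one_sub_X_pow hL,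
    coeff_X_pow, Finset.sum_ite_eq, one_dvd]
  by_cases hn : n ∈ s
  · simp [hn, hs n hn]
  · split_ifs <;> simp

end InvOneSubXPow

theorem qp_eq_prod_Ico (s n : ℕ) : qp s n = ∏ m ∈ Finset.Ico s (s + n), (1 - X ^ m) := by
  rw [qp, Finset.prod_Ico_eq_prod_range, Nat.add_sub_cancel_left]

theorem not_dvd_of_mem_insert_Ico {L m : ℕ} (hL : 2 ≤ L)
    (hm : m ∈ insert (L + 1) (Finset.Ico 2 L)) : ¬ L ∣ m := by
  intro hdvd
  rcases Finset.mem_insert.1 hm with rfl | hm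
  · exact absurd (Nat.le_of_dvd one_pos ((Nat.dvd_add_right dvd_rfl).1 hdvd)) (by omega)
  · rw [Finset.mem_Ico] at hm
    exact absurd (Nat.le_of_dvd (by omega) hdvd) (by omega)

theorem qp_one_mul_one_sub_X_pow_succ_eq_mul_prod {L : ℕ} (hL : 2 ≤ L) :
    qp 1 (L - 1) * (1 - X ^ (L + 1))
      = (1 - X ^ 1) * ∏ m ∈ insert (L + 1) (Finset.Ico 2 L), (1 - X ^ m) := by
  have hIco : Finset.Ico 1 (1 + (L - 1)) = insert 1 (Finset.Ico 2 L) := by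
    ext m; simp only [Finset.mem_Ico, Finset.mem_insert]; omega
  rw [qp_eq_prod_Ico, hIco, Finset.prod_insert (by simp), Finset.prod_insert (by simp)]
  ring

theorem qp_two_eq_mul_prod {L : ℕ} (hL : 2 ≤ L) :
    qp 2 L = (1 - X ^ L) * ∏ m ∈ insert (L + 1) (Finset.Ico 2 L), (1 - X ^ m) := by
  have hIco : Finset.Ico 2 (2 + L) = insert L (insert (L + 1) (Finset.Ico 2 L)) := by
    ext m; simp only [Finset.mem_Ico, Finset.mem_insert]; omega
  rw [qp_eq_prod_Ico, hIco, Finset.prod_insert (by simp)]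

/-- **Theorem 4.1.** For `L ≥ 2`, the series
`H_{L,1}(q) = q/((q;q)_{L-1}(1-q^{L+1})) - (1/(q²;q)_L - 1)` has non-negative coefficients. -/
theorem stmt3 (L : ℕ) (hL : 2 ≤ L) (n : ℕ) :
    0 ≤ coeff n
      ((X : PowerSeries ℚ) * (qp 1 (L - 1) * (1 - X ^ (L + 1)))⁻¹ - ((qp 2 L)⁻¹ - 1)) := by
  set M := insert (L + 1) (Finset.Ico 2 L)
  have hMdvd : ∀ m ∈ M, ¬ L ∣ m := fun m => not_dvd_of_mem_insert_Ico hL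
  have hb : CoeffNonneg ((1 - X ^ 1)⁻¹ - (1 - X ^ L)⁻¹ - ∑ m ∈ M, X ^ m : ℚ⟦X⟧) :=
    coeffNonneg_inv_one_sub_X_sub_inv_one_sub_X_pow_sub_sum (by omega) hMdvd
  have hH : (X : ℚ⟦X⟧) * (qp 1 (L - 1) * (1 - X ^ (L + 1)))⁻¹ - ((qp 2 L)⁻¹ - 1)
      = ((1 - X ^ 1)⁻¹ - (1 - X ^ L)⁻¹ - 1) * (∏ m ∈ M, (1 - X ^ m))⁻¹ + 1 := by
    rw [qp_one_mul_one_sub_X_pow_succ_eq_mul_prod hL, qp_two_eq_mul_prod hL,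
      PowerSeries.mul_inv_rev, PowerSeries.mul_inv_rev]
    linear_combination (∏ m ∈ M, (1 - X ^ m))⁻¹ * X_pow_mul_inv_one_sub_X_pow (K := ℚ) one_ne_zero
  rw [hH]
  exact coeffNonneg_sub_one_mul_inv_prod_add_one (fun h => hMdvd 0 h (dvd_zero L)) hb n
end

section
/- For every positive integer L, the identity Σ_{s=1}^{L} q^{2s+1}/(q^s;q)_{L+2−s} = 1 − q/(1−q^{L+1}) + (2q−1)/(q;q)_{L+1} holds as formal power series in q. -/
/-
With `g s = (1 - q - q^s) / (q^s;q)_{L+2-s}`, the summand `q^{2s+1}/(q^s;q)_{L+2-s}` equals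
`g (s+1) - g s`, because `(q^s;q)_{L+2-s} = (1 - q^s) (q^{s+1};q)_{L+1-s}` and
`(1 - q - q^{s+1})(1 - q^s) - (1 - q - q^s) = q^{2s+1}`. The sum telescopes to `g (L+1) - g 1`,
and `g 1`, `g (L+1)` are the two non-constant terms of the right-hand side.
-/

open PowerSeries

lemma constantCoeff_one_sub_X_pow_s4 {k : Type*} [CommRing k] {s : ℕ} (hs : s ≠ 0) :
    constantCoeff (1 - (X : PowerSeries k) ^ s) = 1 := by
  simp [hs]

lemma qp_one (s : ℕ) : qp s 1 = 1 - X ^ s := by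
  simp [qp]

lemma qp_succ (s n : ℕ) : qp s (n + 1) = (1 - X ^ s) * qp (s + 1) n := by
  rw [qp, Finset.prod_range_succ', mul_comm, qp]
  simp only [add_zero, add_assoc, add_comm 1]

lemma inv_qp_add_one {s : ℕ} (hs : s ≠ 0) (n : ℕ) :
    (qp (s + 1) n)⁻¹ = (1 - X ^ s) * (qp s (n + 1))⁻¹ := by
  rw [qp_succ, PowerSeries.mul_inv_rev, mul_left_comm,
    PowerSeries.mul_inv_cancel _ (by simp [constantCoeff_one_sub_X_pow_s4 hs]), mul_one]

lemma X_pow_mul_inv_qp_eq_sub {s : ℕ} (hs : s ≠ 0) (n : ℕ) :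
    X ^ (2 * s + 1) * (qp s (n + 1))⁻¹
      = (1 - X - X ^ (s + 1)) * (qp (s + 1) n)⁻¹ - (1 - X - X ^ s) * (qp s (n + 1))⁻¹ := by
  rw [inv_qp_add_one hs]
  ring

theorem stmt4_general (L : ℕ) :
    ∑ s ∈ Finset.Icc 1 L, (X : PowerSeries ℚ) ^ (2 * s + 1) * (qp s (L + 2 - s))⁻¹
      = 1 - (X : PowerSeries ℚ) * (1 - (X : PowerSeries ℚ) ^ (L + 1))⁻¹
        + (2 * (X : PowerSeries ℚ) - 1) * (qp 1 (L + 1))⁻¹ := by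
  set g : ℕ → PowerSeries ℚ := fun s => (1 - X - X ^ s) * (qp s (L + 2 - s))⁻¹
  have telescope : ∀ s ∈ Finset.Ico 1 (L + 1),
      (X : PowerSeries ℚ) ^ (2 * s + 1) * (qp s (L + 2 - s))⁻¹ = g (s + 1) - g s := by
    intro s hs
    obtain ⟨hs1, hsL⟩ := Finset.mem_Ico.mp hs
    obtain ⟨n, hn⟩ : ∃ n, L + 2 - s = n + 1 := ⟨L + 1 - s, by omega⟩
    simp only [g, show L + 2 - (s + 1) = n by omega, hn]
    exact X_pow_mul_inv_qp_eq_sub (by omega) n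
  have hunit : (1 - (X : PowerSeries ℚ) ^ (L + 1)) * (1 - X ^ (L + 1))⁻¹ = 1 :=
    PowerSeries.mul_inv_cancel _ (by simp [constantCoeff_one_sub_X_pow_s4])
  rw [← Finset.Ico_add_one_right_eq_Icc, Finset.sum_congr rfl telescope,
    Finset.sum_Ico_sub g (by omega)]
  simp only [g, show L + 2 - (L + 1) = 1 by omega, show L + 2 - 1 = L + 1 by omega, qp_one]
  linear_combination hunit

/-- **Theorem 4.3.** For `L ≥ 1`,
`Σ_{s=1}^{L} q^{2s+1}/(q^s;q)_{L+2-s} = 1 - q/(1-q^{L+1}) + (2q-1)/(q;q)_{L+1}`. -/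
theorem stmt4 (L : ℕ) (hL : 1 ≤ L) :
    ∑ s ∈ Finset.Icc 1 L, (X : PowerSeries ℚ) ^ (2 * s + 1) * (qp s (L + 2 - s))⁻¹
      = 1 - (X : PowerSeries ℚ) * (1 - (X : PowerSeries ℚ) ^ (L + 1))⁻¹
        + (2 * (X : PowerSeries ℚ) - 1) * (qp 1 (L + 1))⁻¹ :=
  stmt4_general L
end

section
/- The identity Σ_{s≥1} q^{2s+1}/(q^s;q)_∞ = 1 − q + (2q−1)/(q;q)_∞ holds for |q| < 1 (equivalently as formal power series). -/
/-!
With `f n = (q ^ n + q - 1) / (q ^ n; q)_∞`, the recurrence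
`(q ^ n; q)_∞ = (1 - q ^ n) (q ^ (n + 1); q)_∞` gives
`f n - f (n + 1) = q ^ (2n + 1) / (q ^ n; q)_∞`. The series therefore telescopes to
`f 1 - lim f`, and `lim f = q - 1` because `(q ^ n; q)_∞ → 1`, which follows from
`(q; q)_∞ ≠ 0` by dividing it by its partial products.
-/

open Filter Topology Finset Asymptotics

theorem Summable.hasSum_sub_succ_of_tendsto {G : Type*} [AddCommGroup G] [TopologicalSpace G]
    [IsTopologicalAddGroup G] [T2Space G] {f : ℕ → G} {L : G}
    (hs : Summable fun n ↦ f n - f (n + 1)) (hf : Tendsto f atTop (𝓝 L)) :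
    HasSum (fun n ↦ f n - f (n + 1)) (f 0 - L) := by
  rw [hs.hasSum_iff_tendsto_nat]
  simpa only [sum_range_sub'] using tendsto_const_nhds.sub hf

section QPochhammer

variable {𝕜 : Type*} [NormedField 𝕜] {q : 𝕜}

/-- `(q ^ n; q)_∞` in the notation `(a; q)_∞ = ∏ i, (1 - a q ^ i)`. -/
noncomputable def qPochhammerPowInf (q : 𝕜) (n : ℕ) : 𝕜 := ∏' i : ℕ, (1 - q ^ (n + i))

lemma summable_norm_neg_pow_add (hq : ‖q‖ < 1) (n : ℕ) :
    Summable fun i : ℕ ↦ ‖-q ^ (n + i)‖ := by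
  simpa [pow_add] using (summable_geometric_of_lt_one (norm_nonneg q) hq).mul_left (‖q‖ ^ n)

lemma one_sub_pow_ne_zero (hq : ‖q‖ < 1) {n : ℕ} (hn : n ≠ 0) : 1 - q ^ n ≠ 0 := by
  rw [sub_ne_zero]
  intro h
  have := pow_lt_one₀ (norm_nonneg q) hq hn
  rw [← norm_pow, ← h, norm_one] at this
  exact lt_irrefl 1 this

variable [CompleteSpace 𝕜]

lemma multipliable_one_sub_pow_add (hq : ‖q‖ < 1) (n : ℕ) :
    Multipliable fun i : ℕ ↦ 1 - q ^ (n + i) := by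
  simpa [sub_eq_add_neg] using multipliable_one_add_of_summable (summable_norm_neg_pow_add hq n)

lemma qPochhammerPowInf_ne_zero (hq : ‖q‖ < 1) {n : ℕ} (hn : n ≠ 0) :
    qPochhammerPowInf q n ≠ 0 := by
  simp_rw [qPochhammerPowInf, sub_eq_add_neg]
  exact tprod_one_add_ne_zero_of_summable
    (fun i ↦ by simpa [← sub_eq_add_neg] using one_sub_pow_ne_zero hq (by omega : n + i ≠ 0))
    (summable_norm_neg_pow_add hq n)

lemma qPochhammerPowInf_eq_mul (hq : ‖q‖ < 1) (n : ℕ) :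
    qPochhammerPowInf q n = (1 - q ^ n) * qPochhammerPowInf q (n + 1) := by
  have hshift (i : ℕ) : n + (i + 1) = n + 1 + i := by omega
  have hmul : Multipliable fun i : ℕ ↦ 1 - q ^ (n + (i + 1)) :=
    (multipliable_one_sub_pow_add hq (n + 1)).congr fun i ↦ by rw [hshift i]
  have h := tprod_eq_zero_mul' (f := fun i : ℕ ↦ 1 - q ^ (n + i)) hmul
  rw [add_zero] at h
  rw [qPochhammerPowInf, h, qPochhammerPowInf]
  exact congrArg _ (tprod_congr fun i ↦ by rw [hshift i])

lemma qPochhammerPowInf_one_eq_prod_mul (hq : ‖q‖ < 1) (n : ℕ) :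
    qPochhammerPowInf q 1
      = (∏ i ∈ range n, (1 - q ^ (1 + i))) * qPochhammerPowInf q (n + 1) := by
  induction n with
  | zero => simp
  | succ n ih =>
    rw [ih, qPochhammerPowInf_eq_mul hq (n + 1), prod_range_succ, add_comm 1, mul_assoc]

lemma tendsto_qPochhammerPowInf (hq : ‖q‖ < 1) :
    Tendsto (qPochhammerPowInf q) atTop (𝓝 1) := by
  rw [← tendsto_add_atTop_iff_nat 1]
  have hne := qPochhammerPowInf_ne_zero hq one_ne_zero
  have hpartial : Tendsto (fun n ↦ ∏ i ∈ range n, (1 - q ^ (1 + i))) atTop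
      (𝓝 (qPochhammerPowInf q 1)) :=
    (multipliable_one_sub_pow_add hq 1).hasProd.tendsto_prod_nat
  have := (tendsto_const_nhds (x := qPochhammerPowInf q 1)).div hpartial hne
  rw [div_self hne] at this
  refine this.congr fun n ↦ ?_
  rw [Pi.div_apply, div_eq_iff, qPochhammerPowInf_one_eq_prod_mul hq n, mul_comm]
  exact prod_ne_zero_iff.2 fun i _ ↦ one_sub_pow_ne_zero hq (by omega)

lemma summable_div_qPochhammerPowInf (hq : ‖q‖ < 1) {u : ℕ → 𝕜}
    (hu : Summable fun n ↦ ‖u n‖) : Summable fun n ↦ u n / qPochhammerPowInf q n := by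
  have hinv : (fun n ↦ (qPochhammerPowInf q n)⁻¹) =O[atTop] fun _ ↦ (1 : 𝕜) :=
    ((tendsto_qPochhammerPowInf hq).inv₀ one_ne_zero).isBigO_one 𝕜
  refine summable_of_isBigO_nat hu ?_
  simpa only [div_eq_mul_inv, mul_one] using ((isBigO_refl u atTop).mul hinv).norm_right

lemma tendsto_pow_add_sub_one_div_qPochhammerPowInf (hq : ‖q‖ < 1) :
    Tendsto (fun n ↦ (q ^ n + q - 1) / qPochhammerPowInf q n) atTop (𝓝 (q - 1)) := by
  have hpow := tendsto_pow_atTop_nhds_zero_of_norm_lt_one hq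
  have := ((hpow.add_const q).sub_const 1).div (tendsto_qPochhammerPowInf hq) one_ne_zero
  rwa [zero_add, div_one] at this

lemma pow_add_sub_one_div_qPochhammerPowInf_sub_succ (hq : ‖q‖ < 1) {n : ℕ} (hn : n ≠ 0) :
    (q ^ n + q - 1) / qPochhammerPowInf q n
        - (q ^ (n + 1) + q - 1) / qPochhammerPowInf q (n + 1)
      = q ^ (2 * n + 1) / qPochhammerPowInf q n := by
  have h₁ := one_sub_pow_ne_zero hq hn
  have h₂ := qPochhammerPowInf_ne_zero hq n.succ_ne_zero
  rw [qPochhammerPowInf_eq_mul hq n]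
  field_simp
  ring

end QPochhammer

/-- **Corollary 4.4.** For `‖q‖ < 1`,
`Σ_{s ≥ 1} q^{2s+1}/(q^s;q)_∞ = 1 - q + (2q-1)/(q;q)_∞`. -/
theorem stmt5 (q : ℂ) (hq : ‖q‖ < 1) :
    ∑' s : ℕ, q ^ (2 * (s + 1) + 1) / (∏' i : ℕ, (1 - q ^ ((s + 1) + i)))
      = 1 - q + (2 * q - 1) / (∏' i : ℕ, (1 - q ^ (i + 1))) := by
  set f : ℕ → ℂ := fun n ↦ (q ^ (n + 1) + q - 1) / qPochhammerPowInf q (n + 1) with hf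
  have hterm (s : ℕ) : q ^ (2 * (s + 1) + 1) / qPochhammerPowInf q (s + 1) = f s - f (s + 1) :=
    (pow_add_sub_one_div_qPochhammerPowInf_sub_succ hq s.succ_ne_zero).symm
  have hodd : Function.Injective fun n : ℕ ↦ 2 * n + 1 := fun m n h ↦ by simpa using h
  have hnorm : Summable fun n ↦ ‖q ^ (2 * n + 1)‖ := by
    simp only [norm_pow]
    exact (summable_geometric_of_lt_one (norm_nonneg q) hq).comp_injective hodd
  have hsum : Summable fun s ↦ f s - f (s + 1) :=
    ((summable_nat_add_iff 1).2 (summable_div_qPochhammerPowInf hq hnorm)).congr hterm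
  have hlim : Tendsto f atTop (𝓝 (q - 1)) :=
    (tendsto_add_atTop_iff_nat 1).2 (tendsto_pow_add_sub_one_div_qPochhammerPowInf hq)
  have hP₁ : ∏' i : ℕ, (1 - q ^ (i + 1)) = qPochhammerPowInf q 1 :=
    tprod_congr fun i ↦ by rw [add_comm]
  change ∑' s : ℕ, q ^ (2 * (s + 1) + 1) / qPochhammerPowInf q (s + 1) = _
  rw [hP₁, tsum_congr hterm, (hsum.hasSum_sub_succ_of_tendsto hlim).tsum_eq]
  have h₀ := qPochhammerPowInf_ne_zero hq one_ne_zero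
  simp only [hf, zero_add, pow_one]
  field_simp
  ring
end

section
/- The identity Σ_{n≥0} (−1)^n (q;q)_n q^{n+1} = Σ_{n≥1} q^{n(n+1)/2}/(−q;q)_n holds for |q| < 1; both sides are the generating function Σ_{π ∈ D} (−1)^{r(π)} q^{|π|}, where D is the set of nonempty partitions into distinct parts and r(π) = l(π) − ν(π) is the rank. -/
/-!
Encode a partition into distinct parts as the finite set `T` of its parts and give it the weight
`(-1)^(max T - #T) q^(ΣT)`. Its absolute values are the terms of `∏ (1 + |q|^i)`, so the sum over
`D` converges absolutely and may be regrouped at will.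

* Grouped by the largest part `n + 1`, the other parts form an arbitrary subset of `{1, …, n}`,
  and the fibre sums to `(-1)^n (q;q)_n q^(n+1)`.
* Grouped by the number of parts `m`, removing the smallest part `k + 1` and subtracting it from
  the others leaves a set of `m - 1` parts, at the cost of the factor `(-q^m)^k q^m`; the
  geometric series in `k` gives `q^m / (1 + q^m)`, and the fibre is `q^(m(m+1)/2) / (-q;q)_m`.
* Grouped by `ΣT`, it is the generating function `Σ_{π ∈ D} (-1)^r(π) q^|π|`.
-/

open Finset

namespace DistinctParts

/-- The nonempty partitions into distinct parts, each encoded by its set of parts `T`; the largest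
part `l(π)` is then `T.sup id` and the number of parts `ν(π)` is `#T`. -/
abbrev D : Type := {T : Finset ℕ // 0 ∉ T ∧ T.Nonempty}

def rank (T : Finset ℕ) : ℕ := T.sup id - #T

def weight {R : Type*} [CommRing R] (q : R) (T : Finset ℕ) : R :=
  (-1) ^ rank T * q ^ ∑ i ∈ T, i

abbrev WithCard (m : ℕ) : Type := {T : Finset ℕ // 0 ∉ T ∧ #T = m}

lemma WithCard.nonempty {m : ℕ} (S : WithCard (m + 1)) : S.1.Nonempty :=
  card_pos.1 (by rw [S.2.2]; exact m.succ_pos)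

lemma card_le_sup_id {T : Finset ℕ} (h : 0 ∉ T) : #T ≤ T.sup id :=
  calc #T ≤ #(Icc 1 (T.sup id)) := card_le_card fun x hx =>
        mem_Icc.2 ⟨Nat.one_le_iff_ne_zero.2 (by rintro rfl; exact h hx), le_sup (f := id) hx⟩
    _ = T.sup id := by simp

lemma sup_id_mem {S : Finset ℕ} (h : S.Nonempty) : S.sup id ∈ S := by
  obtain ⟨i, hi, hsup⟩ := exists_mem_eq_sup S h id
  exact hsup ▸ hi

lemma succ_notMem_of_subset_Icc {n : ℕ} {T : Finset ℕ} (hT : T ⊆ Icc 1 n) : n + 1 ∉ T :=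
  fun h => by simpa using hT h

lemma sup_id_insert_of_subset_Icc {n : ℕ} {T : Finset ℕ} (hT : T ⊆ Icc 1 n) :
    (insert (n + 1) T).sup id = n + 1 :=
  sup_insert.trans <| sup_eq_left.2 <| Finset.sup_le fun x hx => by
    simpa using (mem_Icc.1 (hT hx)).2.trans n.le_succ

lemma add_notMem_map_add {T : Finset ℕ} (h0 : 0 ∉ T) (c : ℕ) :
    c ∉ T.map (addRightEmbedding c) := by
  simpa using h0

lemma sup_id_insert_map_add (T : Finset ℕ) (c : ℕ) :
    (insert c (T.map (addRightEmbedding c))).sup id = T.sup id + c := by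
  rw [sup_insert, sup_map]
  rcases T.eq_empty_or_nonempty with rfl | hT
  · simp
  · have h : T.sup (id ∘ addRightEmbedding c) = T.sup id + c :=
      (apply_sup_eq_sup_comp_of_nonempty (fun _ _ h => Nat.add_le_add_right h c) hT).symm
    rw [h]
    exact max_eq_right (Nat.le_add_left c _)

lemma min'_insert_map_add (T : Finset ℕ) (c : ℕ)
    (h : (insert c (T.map (addRightEmbedding c))).Nonempty) :
    (insert c (T.map (addRightEmbedding c))).min' h = c :=
  le_antisymm (min'_le _ _ (mem_insert_self _ _)) <| le_min' _ _ _ fun y hy => by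
    obtain rfl | hy := mem_insert.1 hy
    · rfl
    · obtain ⟨x, -, rfl⟩ := mem_map.1 hy
      simp

lemma map_add_image_sub_of_le {S : Finset ℕ} {s : ℕ} (h : ∀ x ∈ S, s ≤ x) :
    (S.image (· - s)).map (addRightEmbedding s) = S := by
  rw [map_eq_image, image_image]
  exact (image_congr fun x hx => Nat.sub_add_cancel (h x hx)).trans image_id

lemma card_image_sub_of_le {S : Finset ℕ} {s : ℕ} (h : ∀ x ∈ S, s ≤ x) :
    #(S.image (· - s)) = #S :=
  card_image_of_injOn fun x hx y hy hxy => by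
    have := h x hx
    have := h y hy
    omega

section Algebra

variable {R : Type*} [CommRing R]

lemma weight_insert_of_subset_Icc (q : R) {n : ℕ} {T : Finset ℕ} (hT : T ⊆ Icc 1 n) :
    weight q (insert (n + 1) T) = (-1) ^ n * q ^ (n + 1) * ((-1) ^ #T * q ^ ∑ i ∈ T, i) := by
  have hn := succ_notMem_of_subset_Icc hT
  have hcard : #T ≤ n := by simpa using card_le_card hT
  obtain ⟨d, hd⟩ := Nat.exists_eq_add_of_le hcard
  have hrank : rank (insert (n + 1) T) = d := by
    rw [rank, sup_id_insert_of_subset_Icc hT, card_insert_of_notMem hn]; omega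
  have hsign : (-1 : R) ^ d = (-1) ^ n * (-1) ^ #T := by
    rw [hd, pow_add, mul_right_comm, ← pow_add, Even.neg_one_pow ⟨_, rfl⟩, one_mul]
  rw [weight, hrank, hsign, sum_insert hn, pow_add q]
  ring

lemma prod_one_sub_pow_eq_sum_powerset (q : R) (s : Finset ℕ) :
    ∏ i ∈ s, (1 - q ^ i) = ∑ t ∈ s.powerset, (-1) ^ #t * q ^ ∑ i ∈ t, i := by
  simp_rw [sub_eq_add_neg, prod_one_add, prod_neg, ← prod_pow_eq_pow_sum]

lemma sum_weight_insert_succ (q : R) (n : ℕ) :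
    ∑ T ∈ (Icc 1 n).powerset, weight q (insert (n + 1) T)
      = (-1) ^ n * (∏ i ∈ range n, (1 - q ^ (i + 1))) * q ^ (n + 1) := by
  rw [sum_congr rfl fun T hT => weight_insert_of_subset_Icc q (mem_powerset.1 hT), ← mul_sum,
    ← prod_one_sub_pow_eq_sum_powerset, ← Ico_add_one_right_eq_Icc, prod_Ico_eq_prod_range]
  simp_rw [Nat.add_sub_cancel, add_comm 1]
  ring

lemma weight_insert_map_add (q : R) {m : ℕ} {T : Finset ℕ} (h0 : 0 ∉ T) (hT : #T = m) (k : ℕ) :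
    weight q (insert (k + 1) (T.map (addRightEmbedding (k + 1))))
      = (-q ^ (m + 1)) ^ k * q ^ (m + 1) * weight q T := by
  have hk := add_notMem_map_add h0 (k + 1)
  have hrank : rank (insert (k + 1) (T.map (addRightEmbedding (k + 1)))) = k + rank T := by
    have := card_le_sup_id h0
    rw [rank, rank, sup_id_insert_map_add, card_insert_of_notMem hk, card_map]; omega
  rw [weight, weight, hrank, sum_insert hk, sum_map]
  simp only [addRightEmbedding_apply, sum_add_distrib, sum_const, hT, smul_eq_mul]
  rw [neg_pow (q ^ (m + 1)), ← pow_mul]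
  ring

lemma weight_parts (q : R) {N : ℕ} (p : Nat.Partition N) (h : p.parts.Nodup) :
    weight q ⟨p.parts, h⟩ = (-1) ^ (p.parts.sup - Multiset.card p.parts) * q ^ N := by
  rw [weight, rank, sup_def, sum_eq_multiset_sum]
  simp only [Multiset.map_id', Multiset.map_id, p.parts_sum]
  rfl

end Algebra

def sigmaPowersetEquiv : (Σ n : ℕ, (Icc 1 n).powerset) ≃ D where
  toFun x := ⟨insert (x.1 + 1) x.2.1, by
      simp only [mem_insert, not_or]
      exact ⟨by omega, fun h => by simpa using mem_powerset.1 x.2.2 h⟩, insert_nonempty _ _⟩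
  invFun S := ⟨S.1.sup id - 1, S.1.erase (S.1.sup id), mem_powerset.2 fun x hx => by
      have hpos := Nat.pos_of_ne_zero (ne_of_mem_of_not_mem (mem_of_mem_erase hx) S.2.1)
      have hle := le_sup (f := id) (mem_of_mem_erase hx)
      have hne := ne_of_mem_erase hx
      simp only [id] at hle
      exact mem_Icc.2 ⟨hpos, by omega⟩⟩
  left_inv := by
    rintro ⟨n, T, hT⟩
    have hT := mem_powerset.1 hT
    refine Sigma.subtype_ext ?_ ?_ <;> dsimp only <;> rw [sup_id_insert_of_subset_Icc hT]
    · rfl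
    · exact erase_insert (succ_notMem_of_subset_Icc hT)
  right_inv S := by
    have hmem := sup_id_mem S.2.2
    have hpos := Nat.pos_of_ne_zero (ne_of_mem_of_not_mem hmem S.2.1)
    exact Subtype.ext <| by dsimp only; rw [Nat.sub_add_cancel hpos, insert_erase hmem]

def insertShiftEquiv (m : ℕ) : ℕ × WithCard m ≃ WithCard (m + 1) where
  toFun p := ⟨insert (p.1 + 1) (p.2.1.map (addRightEmbedding (p.1 + 1))), by simp, by
      rw [card_insert_of_notMem (add_notMem_map_add p.2.2.1 _), card_map, p.2.2.2]⟩
  invFun S :=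
    (S.1.min' S.nonempty - 1,
      ⟨(S.1.erase (S.1.min' S.nonempty)).image (· - S.1.min' S.nonempty), by
        simp only [mem_image, not_exists, not_and]
        intro x hx
        have := min'_lt_of_mem_erase_min' _ _ hx
        omega, by
        rw [card_image_sub_of_le fun x hx => (min'_lt_of_mem_erase_min' _ _ hx).le,
          card_erase_of_mem (min'_mem _ _), S.2.2, Nat.add_sub_cancel]⟩)
  left_inv := by
    rintro ⟨k, T, h0, hT⟩
    dsimp only
    simp only [min'_insert_map_add, Nat.add_sub_cancel, erase_insert (add_notMem_map_add h0 _)]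
    refine Prod.ext rfl (Subtype.ext ?_)
    simp [map_eq_image, image_image, Function.comp_def]
  right_inv := by
    rintro ⟨S, h0, hS⟩
    have hmem := min'_mem S (WithCard.nonempty ⟨S, h0, hS⟩)
    have hpos := Nat.pos_of_ne_zero (ne_of_mem_of_not_mem hmem h0)
    refine Subtype.ext ?_
    dsimp only
    rw [Nat.sub_add_cancel hpos,
      map_add_image_sub_of_le fun x hx => (min'_lt_of_mem_erase_min' _ _ hx).le,
      insert_erase hmem]

def sigmaCardEquiv : (Σ m : ℕ, WithCard (m + 1)) ≃ D where
  toFun x := ⟨x.2.1, x.2.2.1, x.2.nonempty⟩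
  invFun S := ⟨#S.1 - 1, S.1, S.2.1, (Nat.sub_add_cancel (card_pos.2 S.2.2)).symm⟩
  left_inv := by
    rintro ⟨m, T, h0, hT⟩
    exact Sigma.subtype_ext (by simp [hT]) rfl
  right_inv _ := rfl

def sigmaPartitionEquiv :
    (Σ N : ℕ, {p : Nat.Partition N // p.parts.Nodup ∧ p.parts ≠ 0}) ≃ D where
  toFun x := ⟨⟨x.2.1.parts, x.2.2.1⟩, fun h => (x.2.1.parts_pos h).ne' rfl,
    Multiset.exists_mem_of_ne_zero x.2.2.2⟩
  invFun S :=
    ⟨S.1.1.sum, ⟨S.1.1, fun hi => Nat.pos_of_ne_zero (ne_of_mem_of_not_mem hi S.2.1), rfl⟩,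
      S.1.2, fun h => S.2.2.ne_empty (val_eq_zero.1 h)⟩
  left_inv := by
    rintro ⟨N, ⟨parts, pos, rfl⟩, hp⟩
    rfl
  right_inv _ := rfl

section Analysis

variable {𝕜 : Type*} [NormedField 𝕜] {q : 𝕜}

lemma summable_norm_weight (hq : ‖q‖ < 1) : Summable fun T : Finset ℕ => ‖weight q T‖ := by
  refine (summable_finsetProd_of_summable_nonneg (fun i => pow_nonneg (norm_nonneg q) i)
    (summable_geometric_of_lt_one (norm_nonneg q) hq)).congr fun T => ?_
  simp [weight, prod_pow_eq_pow_sum T (fun i => i)]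

variable [CompleteSpace 𝕜]

lemma summable_weight_subtype (hq : ‖q‖ < 1) (p : Finset ℕ → Prop) :
    Summable fun T : {T // p T} => weight q T.1 :=
  ((summable_norm_weight hq).comp_injective Subtype.val_injective).of_norm

lemma tsum_weight_eq_tsum_sigma (hq : ‖q‖ < 1) {β : ℕ → Type*} (e : (Σ n, β n) ≃ D) :
    ∑' T : D, weight q T.1 = ∑' (n : ℕ) (b : β n), weight q (e ⟨n, b⟩).1 := by
  rw [← e.tsum_eq]
  exact Summable.tsum_sigma (e.summable_iff.2 (summable_weight_subtype hq _))

lemma tsum_weight_eq_tsum_max (hq : ‖q‖ < 1) :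
    ∑' T : D, weight q T.1
      = ∑' n : ℕ, (-1) ^ n * (∏ i ∈ range n, (1 - q ^ (i + 1))) * q ^ (n + 1) := by
  rw [tsum_weight_eq_tsum_sigma hq sigmaPowersetEquiv]
  exact tsum_congr fun n => (tsum_fintype _).trans <|
    (sum_coe_sort _ fun T => weight q (insert (n + 1) T)).trans (sum_weight_insert_succ q n)

lemma tsum_weight_withCard (hq : ‖q‖ < 1) (m : ℕ) :
    ∑' T : WithCard m, weight q T.1 = ∏ i ∈ range m, q ^ (i + 1) / (1 + q ^ (i + 1)) := by
  induction m with
  | zero =>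
    rw [tsum_eq_single ⟨∅, by simp⟩ fun T hT => absurd (Subtype.ext (card_eq_zero.1 T.2.2)) hT]
    simp [weight, rank]
  | succ m ih =>
    have hqm : ‖-q ^ (m + 1)‖ < 1 := by
      rw [norm_neg, norm_pow]; exact pow_lt_one₀ (norm_nonneg q) hq m.succ_ne_zero
    have hgeom : ∑' k : ℕ, (-q ^ (m + 1)) ^ k * q ^ (m + 1) = q ^ (m + 1) / (1 + q ^ (m + 1)) := by
      rw [tsum_mul_right, tsum_geometric_of_norm_lt_one hqm, sub_neg_eq_add, inv_mul_eq_div]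
    have hgeom_norm : Summable fun k : ℕ => ‖(-q ^ (m + 1)) ^ k * q ^ (m + 1)‖ := by
      simpa only [norm_mul] using (summable_norm_geometric_of_norm_lt_one hqm).mul_right _
    calc ∑' T : WithCard (m + 1), weight q T.1
        = ∑' p : ℕ × WithCard m, weight q (insertShiftEquiv m p).1 :=
          ((insertShiftEquiv m).tsum_eq fun T => weight q T.1).symm
      _ = ∑' p : ℕ × WithCard m, (-q ^ (m + 1)) ^ p.1 * q ^ (m + 1) * weight q p.2.1 :=
          tsum_congr fun p => weight_insert_map_add q p.2.2.1 p.2.2.2 p.1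
      _ = (∑' k : ℕ, (-q ^ (m + 1)) ^ k * q ^ (m + 1)) * ∑' T : WithCard m, weight q T.1 :=
          (tsum_mul_tsum_of_summable_norm hgeom_norm
            ((summable_norm_weight hq).comp_injective Subtype.val_injective)).symm
      _ = ∏ i ∈ range (m + 1), q ^ (i + 1) / (1 + q ^ (i + 1)) := by
          rw [hgeom, ih, prod_range_succ, mul_comm]

lemma tsum_weight_eq_tsum_card (hq : ‖q‖ < 1) :
    ∑' T : D, weight q T.1
      = ∑' n : ℕ, q ^ ((n + 1) * (n + 2) / 2) / ∏ i ∈ range (n + 1), (1 + q ^ (i + 1)) := by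
  rw [tsum_weight_eq_tsum_sigma hq sigmaCardEquiv]
  refine tsum_congr fun n => ?_
  have hgauss : ∑ i ∈ range (n + 1), (i + 1) = (n + 1) * (n + 2) / 2 := by
    have := sum_range_succ' (fun i => i) (n + 1)
    rw [sum_range_id, add_zero] at this
    rw [← this, Nat.mul_comm]
    rfl
  refine (tsum_weight_withCard hq (n + 1)).trans ?_
  rw [prod_div_distrib, prod_pow_eq_pow_sum, hgauss]

lemma tsum_weight_eq_tsum_partitions (hq : ‖q‖ < 1) :
    ∑' T : D, weight q T.1
      = ∑' N : ℕ, (∑ p ∈ univ.filter (fun p : Nat.Partition N => p.parts.Nodup ∧ p.parts ≠ 0),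
          (-1 : 𝕜) ^ (p.parts.sup - Multiset.card p.parts)) * q ^ N := by
  rw [tsum_weight_eq_tsum_sigma hq sigmaPartitionEquiv]
  refine tsum_congr fun N => ?_
  rw [tsum_fintype, sum_mul,
    sum_subtype _ (p := fun p : Nat.Partition N => p.parts.Nodup ∧ p.parts ≠ 0) (by simp)]
  exact sum_congr rfl fun p _ => weight_parts q p.1 p.2.1

end Analysis

end DistinctParts

/-- **Identity (5.1).** For `‖q‖ < 1`,
`Σ_{n ≥ 0} (-1)^n (q;q)_n q^{n+1} = Σ_{n ≥ 1} q^{n(n+1)/2}/(-q;q)_n`, and both sides equal the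
generating function `Σ_{π ∈ D} (-1)^{r(π)} q^{|π|}` over nonempty partitions `π` into distinct
parts, where `r(π) = l(π) - ν(π)` is the rank. -/
theorem stmt12 (q : ℂ) (hq : ‖q‖ < 1) :
    (∑' n : ℕ, (-1 : ℂ) ^ n * (∏ i ∈ Finset.range n, (1 - q ^ (i + 1))) * q ^ (n + 1)
      = ∑' n : ℕ, q ^ ((n + 1) * (n + 2) / 2)
          / ∏ i ∈ Finset.range (n + 1), (1 + q ^ (i + 1)))
    ∧
    (∑' n : ℕ, (-1 : ℂ) ^ n * (∏ i ∈ Finset.range n, (1 - q ^ (i + 1))) * q ^ (n + 1)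
      = ∑' N : ℕ,
          (∑ p ∈ Finset.univ.filter
              (fun p : Nat.Partition N => p.parts.Nodup ∧ p.parts ≠ 0),
            (-1 : ℂ) ^ (p.parts.sup - Multiset.card p.parts)) * q ^ N) := by
  rw [← DistinctParts.tsum_weight_eq_tsum_max hq]
  exact ⟨DistinctParts.tsum_weight_eq_tsum_card hq,
    DistinctParts.tsum_weight_eq_tsum_partitions hq⟩
end

section
/- For every positive integer L, the identity Σ_{n≥1} (q^{2n}/(1−q^n)) · C(L+n−1, n−1)_q = (1/(1−q^L)) · (1/(q²;q)_L − 1) holds, where C(m,k)_q denotes the Gaussian binomial coefficient. -/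
/-!
Multiplied by `D = (1 - q^L) (q;q)_{L+1}`, the `n`-th summand becomes
`q^{2n} (1 - q^L) (1 - q^{L+1}) (q^{n+1};q)_{L-1}`, which is the difference `P n - P (n-1)` of
`P N = (q^{N+1};q)_L (1 - q + q^{N+1} - q^{N+L+1})`. So the `N`-th partial sum is
`(P N - P 0) / D` with `P 0 = (q;q)_{L+1}`. Since `P N ≡ 1 - q` modulo `q^{N+1}`, its coefficient
of `q^N` agrees with that of `(1 - q - (q;q)_{L+1}) / D`, the right-hand side. The algebra is done
in the field of Laurent series, where `q` is not a root of unity.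
-/

open PowerSeries

noncomputable def gb (m k : ℕ) : PowerSeries ℚ := qp 1 m * (qp 1 k)⁻¹ * (qp 1 (m - k))⁻¹

open Finset

section CommRing

variable {R : Type*} [CommRing R] (x : R)

def qPochhammer (s n : ℕ) : R := ∏ i ∈ range n, (1 - x ^ (s + i))

@[simp]
lemma qPochhammer_zero (s : ℕ) : qPochhammer x s 0 = 1 := prod_range_zero _

lemma qPochhammer_succ (s n : ℕ) :
    qPochhammer x s (n + 1) = qPochhammer x s n * (1 - x ^ (s + n)) :=
  prod_range_succ _ _

lemma qPochhammer_succ' (s n : ℕ) :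
    qPochhammer x s (n + 1) = (1 - x ^ s) * qPochhammer x (s + 1) n := by
  rw [qPochhammer, prod_range_succ', mul_comm, add_zero]
  simp only [qPochhammer, add_assoc, add_comm 1]

lemma qPochhammer_add (s a b : ℕ) :
    qPochhammer x s (a + b) = qPochhammer x s a * qPochhammer x (s + a) b := by
  simp only [qPochhammer, prod_range_add, add_assoc]

lemma map_qPochhammer {S : Type*} [CommRing S] (f : R →+* S) (s n : ℕ) :
    f (qPochhammer x s n) = qPochhammer (f x) s n := by
  simp [qPochhammer, map_prod]

lemma pow_dvd_qPochhammer_sub_one (s n : ℕ) : x ^ s ∣ qPochhammer x s n - 1 := by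
  induction n with
  | zero => simp
  | succ n ih =>
    rw [qPochhammer_succ, pow_add,
      show qPochhammer x s n * (1 - x ^ s * x ^ n) - 1
        = (qPochhammer x s n - 1) - qPochhammer x s n * x ^ n * x ^ s by ring]
    exact dvd_sub ih (dvd_mul_left _ _)

def partialSumNumerator (L N : ℕ) : R :=
  qPochhammer x (N + 1) L * (1 - x + x ^ (N + 1) - x ^ (N + L + 1))

lemma partialSumNumerator_zero (L : ℕ) : partialSumNumerator x L 0 = qPochhammer x 1 (L + 1) := by
  rw [partialSumNumerator, qPochhammer_succ]
  ring

lemma partialSumNumerator_succ_sub (L N : ℕ) :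
    partialSumNumerator x (L + 1) (N + 1) - partialSumNumerator x (L + 1) N
      = x ^ (2 * (N + 1)) * (1 - x ^ (L + 1)) * (1 - x ^ (L + 2)) * qPochhammer x (N + 2) L := by
  rw [partialSumNumerator, partialSumNumerator, qPochhammer_succ, qPochhammer_succ' x (N + 1)]
  ring

lemma map_partialSumNumerator {S : Type*} [CommRing S] (f : R →+* S) (L N : ℕ) :
    f (partialSumNumerator x L N) = partialSumNumerator (f x) L N := by
  simp [partialSumNumerator, map_qPochhammer]

lemma pow_dvd_partialSumNumerator_sub (L N : ℕ) :
    x ^ (N + 1) ∣ partialSumNumerator x L N - (1 - x) := by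
  obtain ⟨c, hc⟩ := pow_dvd_qPochhammer_sub_one x (N + 1) L
  refine ⟨c * (1 - x) + qPochhammer x (N + 1) L * (1 - x ^ L), ?_⟩
  rw [partialSumNumerator, eq_add_of_sub_eq hc]
  ring

end CommRing

section Field

variable {K : Type*} [Field K] {x : K}

def qBinomial (x : K) (m k : ℕ) : K :=
  qPochhammer x 1 m * (qPochhammer x 1 k)⁻¹ * (qPochhammer x 1 (m - k))⁻¹

lemma one_sub_pow_ne_zero_s13 (hx : ¬IsOfFinOrder x) {m : ℕ} (hm : m ≠ 0) : 1 - x ^ m ≠ 0 :=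
  sub_ne_zero.2 fun h => hx (isOfFinOrder_iff_pow_eq_one.2 ⟨m, Nat.pos_of_ne_zero hm, h.symm⟩)

lemma qPochhammer_ne_zero (hx : ¬IsOfFinOrder x) {s : ℕ} (hs : s ≠ 0) (n : ℕ) :
    qPochhammer x s n ≠ 0 :=
  prod_ne_zero_iff.2 fun i _ => one_sub_pow_ne_zero_s13 hx (by omega)

lemma summand_mul_denom (hx : ¬IsOfFinOrder x) (L N : ℕ) :
    x ^ (2 * (N + 1)) * (1 - x ^ (N + 1))⁻¹ * qBinomial x (L + 1 + N) N
        * ((1 - x ^ (L + 1)) * qPochhammer x 1 (L + 2))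
      = x ^ (2 * (N + 1)) * (1 - x ^ (L + 1)) * (1 - x ^ (L + 2)) * qPochhammer x (N + 2) L := by
  have hsplit : qPochhammer x 1 (L + 1 + N)
      = qPochhammer x 1 N * (1 - x ^ (N + 1)) * qPochhammer x (N + 2) L := by
    rw [show L + 1 + N = N + 1 + L by ring, qPochhammer_add, qPochhammer_succ]
    ring_nf
  rw [qBinomial, Nat.add_sub_cancel, hsplit, qPochhammer_succ x 1 (L + 1), add_comm 1 (L + 1)]
  have := qPochhammer_ne_zero hx one_ne_zero N
  have := qPochhammer_ne_zero hx one_ne_zero (L + 1)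
  have := one_sub_pow_ne_zero_s13 hx (m := N + 1) (by omega)
  field_simp

lemma sum_summand_mul_denom (hx : ¬IsOfFinOrder x) (L N : ℕ) :
    (∑ n ∈ Icc 1 N, x ^ (2 * n) * (1 - x ^ n)⁻¹ * qBinomial x (L + 1 + n - 1) (n - 1))
        * ((1 - x ^ (L + 1)) * qPochhammer x 1 (L + 2))
      = partialSumNumerator x (L + 1) N - partialSumNumerator x (L + 1) 0 := by
  induction N with
  | zero => simp
  | succ N ih =>
    rw [sum_Icc_succ_top (by omega), add_mul, ih, Nat.add_sub_cancel, ← Nat.add_assoc,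
      Nat.add_sub_cancel, summand_mul_denom hx, ← partialSumNumerator_succ_sub]
    ring

lemma sum_summand_eq (hx : ¬IsOfFinOrder x) (L N : ℕ) :
    ∑ n ∈ Icc 1 N, x ^ (2 * n) * (1 - x ^ n)⁻¹ * qBinomial x (L + 1 + n - 1) (n - 1)
      = (1 - x ^ (L + 1))⁻¹ * ((qPochhammer x 2 (L + 1))⁻¹ - 1)
        + (partialSumNumerator x (L + 1) N - (1 - x)) * (1 - x ^ (L + 1))⁻¹
          * (qPochhammer x 1 (L + 2))⁻¹ := by
  have hL := one_sub_pow_ne_zero_s13 hx (m := L + 1) (by omega)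
  have hq := qPochhammer_ne_zero hx two_ne_zero (L + 1)
  have h1 : 1 - x ≠ 0 := by simpa using one_sub_pow_ne_zero_s13 hx one_ne_zero
  rw [← mul_left_inj' (mul_ne_zero hL (qPochhammer_ne_zero hx one_ne_zero (L + 2))),
    sum_summand_mul_denom hx, partialSumNumerator_zero, qPochhammer_succ' x 1 (L + 1)]
  field_simp
  ring

end Field

section PowerSeries

variable {k : Type*} [Field k]

lemma HahnSeries.ofPowerSeries_inv {f : k⟦X⟧} (h : constantCoeff f ≠ 0) :
    ofPowerSeries ℤ k f⁻¹ = (ofPowerSeries ℤ k f)⁻¹ :=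
  eq_inv_of_mul_eq_one_right (by rw [← map_mul, PowerSeries.mul_inv_cancel f h, map_one])

lemma HahnSeries.ofPowerSeries_inv_one_sub_X_pow {m : ℕ} (hm : m ≠ 0) :
    ofPowerSeries ℤ k (1 - X ^ m)⁻¹ = (1 - ofPowerSeries ℤ k X ^ m)⁻¹ := by
  rw [ofPowerSeries_inv (by simp [hm]), map_sub, map_one, map_pow]

lemma HahnSeries.ofPowerSeries_inv_qPochhammer_X {s : ℕ} (hs : s ≠ 0) (n : ℕ) :
    ofPowerSeries ℤ k (qPochhammer X s n)⁻¹
      = (qPochhammer (ofPowerSeries ℤ k X) s n)⁻¹ := by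
  rw [ofPowerSeries_inv (by simp [qPochhammer, hs]), map_qPochhammer]

lemma HahnSeries.not_isOfFinOrder_ofPowerSeries_X : ¬IsOfFinOrder (ofPowerSeries ℤ k X) := by
  rw [isOfFinOrder_iff_pow_eq_one]
  rintro ⟨m, hm, h⟩
  rw [← map_pow, ← map_one (ofPowerSeries ℤ k)] at h
  have h0 := congrArg (PowerSeries.coeff 0) (ofPowerSeries_injective h)
  simp [coeff_X_pow] at h0
  omega

end PowerSeries

open HahnSeries

lemma qp_eq_qPochhammer (s n : ℕ) : qp s n = qPochhammer X s n := rfl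

lemma ofPowerSeries_gb (m j : ℕ) :
    ofPowerSeries ℤ ℚ (gb m j) = qBinomial (ofPowerSeries ℤ ℚ X) m j := by
  simp only [gb, qBinomial, qp_eq_qPochhammer, map_mul, map_qPochhammer,
    ofPowerSeries_inv_qPochhammer_X one_ne_zero]

lemma sum_gb_summand_eq (L N : ℕ) :
    ∑ n ∈ Icc 1 N, (X : ℚ⟦X⟧) ^ (2 * n) * (1 - X ^ n)⁻¹ * gb (L + 1 + n - 1) (n - 1)
      = (1 - X ^ (L + 1))⁻¹ * ((qp 2 (L + 1))⁻¹ - 1)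
        + (partialSumNumerator X (L + 1) N - (1 - X)) * (1 - X ^ (L + 1))⁻¹
          * (qPochhammer X 1 (L + 2))⁻¹ := by
  apply ofPowerSeries_injective (Γ := ℤ)
  rw [map_sum, sum_congr rfl fun n hn => by
    rw [map_mul, map_mul, ofPowerSeries_inv_one_sub_X_pow (by simp at hn; omega)]]
  simp only [map_add, map_mul, map_sub, map_pow, map_one, ofPowerSeries_gb, qp_eq_qPochhammer,
    ofPowerSeries_inv_one_sub_X_pow L.succ_ne_zero, ofPowerSeries_inv_qPochhammer_X two_ne_zero,
    ofPowerSeries_inv_qPochhammer_X one_ne_zero, map_partialSumNumerator]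
  exact sum_summand_eq not_isOfFinOrder_ofPowerSeries_X L N

-- The coefficient of `q^N` of the series is the finite sum over `n ≤ N`, since the `n`-th summand
-- has order at least `2n`.
/-- For `L ≥ 1`, `Σ_{n ≥ 1} (q^{2n}/(1-q^n)) C(L+n-1, n-1)_q = (1/(1-q^L))(1/(q²;q)_L - 1)`.
Since the summand indexed by `n` has order at least `2n` in `q`, the coefficient of `q^N`
of the series equals the finite sum over `1 ≤ n ≤ N`. -/
theorem stmt13 (L : ℕ) (hL : 1 ≤ L) (N : ℕ) :
    ∑ n ∈ Finset.Icc 1 N,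
        coeff N ((X : PowerSeries ℚ) ^ (2 * n) * (1 - X ^ n)⁻¹ * gb (L + n - 1) (n - 1))
      = coeff N ((1 - (X : PowerSeries ℚ) ^ L)⁻¹ * ((qp 2 L)⁻¹ - 1)) := by
  obtain ⟨L, rfl⟩ := Nat.exists_eq_add_of_le' hL
  obtain ⟨c, hc⟩ := pow_dvd_partialSumNumerator_sub (X : ℚ⟦X⟧) (L + 1) N
  rw [← map_sum, sum_gb_summand_eq, map_add, hc, mul_assoc, mul_assoc, coeff_X_pow_mul',
    if_neg (by omega), add_zero]
end
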